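/- Let f1, f2 ∈ A[X1,X2] be homogeneous of degrees d1 ≤ d2 forming a regular sequence, with δ = d1+d2−2. For every ν with 0 ≤ δ−ν ≤ d1−1, the Morley form component of bidegree (δ−ν, ν) satisfies morl_{δ−ν,ν}(f1,f2) = Σ_{|α|=δ−ν} X^α ⊗ sylv_α(f1,f2) in B_{δ−ν} ⊗_A B_ν, where C_{δ−ν} ≅ B_{δ−ν}. -/
import Mathlib

open MvPolynomial

namespace Stmt18Aux

variable {A : Type*} [CommRing A]

lemma weight_fin4 (w : Fin 4 → ℕ) (μ : Fin 4 →₀ ℕ) :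
    Finsupp.weight w μ = μ 0 * w 0 + μ 1 * w 1 + μ 2 * w 2 + μ 3 * w 3 := by
  rw [Finsupp.weight_apply, Finsupp.sum_fintype]
  · simp [Fin.sum_univ_four, smul_eq_mul]
  · intro i; simp

noncomputable def Ew (α1 α2 : ℕ) :
    MvPolynomial (Fin 4) A →ₗ[A] MvPolynomial (Fin 4) A :=
  (weightedHomogeneousComponent ![0,1,0,0] α2).comp
    (weightedHomogeneousComponent ![1,0,0,0] α1)

lemma coeff_Ew (α1 α2 : ℕ) (p : MvPolynomial (Fin 4) A) (μ : Fin 4 →₀ ℕ) :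
    coeff μ (Ew α1 α2 p) = if μ 0 = α1 ∧ μ 1 = α2 then coeff μ p else 0 := by
  simp only [Ew, LinearMap.comp_apply, coeff_weightedHomogeneousComponent, weight_fin4]
  simp only [Matrix.cons_val_zero, Matrix.cons_val_one, Matrix.head_cons,
    Matrix.cons_val_two, Matrix.tail_cons, Matrix.cons_val_three, Matrix.head_fin_const]
  split_ifs <;> first | rfl | omega

lemma rename23_coeff {g : MvPolynomial (Fin 2) A} {μ : Fin 4 →₀ ℕ}
    (h : coeff μ (rename ![2,3] g) ≠ 0) : μ 0 = 0 ∧ μ 1 = 0 := by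
  obtain ⟨u, rfl, -⟩ := coeff_rename_ne_zero _ _ _ h
  constructor <;>
  · apply Finsupp.mapDomain_notin_range
    rintro ⟨i, hi⟩
    fin_cases i <;> simp_all

lemma renameX_coeff {f : MvPolynomial (Fin 2) A} {d : ℕ} (hf : f.IsHomogeneous d)
    {μ : Fin 4 →₀ ℕ} (h : coeff μ (rename ![0,1] f) ≠ 0) : μ 0 + μ 1 = d := by
  obtain ⟨u, rfl, hu⟩ := coeff_rename_ne_zero _ _ _ h
  have hinj : Function.Injective (![0,1] : Fin 2 → Fin 4) := by
    intro a b hab; fin_cases a <;> fin_cases b <;> simp_all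
  have h0 := Finsupp.mapDomain_apply hinj u 0
  have h1 := Finsupp.mapDomain_apply hinj u 1
  simp only [Matrix.cons_val_zero, Matrix.cons_val_one, Matrix.head_cons] at h0 h1
  have := hf hu
  rw [Finsupp.weight_apply, Finsupp.sum_fintype] at this
  · rw [Fin.sum_univ_two] at this
    simp only [Pi.one_apply, smul_eq_mul, mul_one] at this
    rw [h0, h1]; exact this
  · intro i; simp

lemma Ew_mul_rename (α1 α2 : ℕ) (t : MvPolynomial (Fin 4) A) (g : MvPolynomial (Fin 2) A) :
    Ew α1 α2 (t * rename ![2,3] g) = Ew α1 α2 t * rename ![2,3] g := by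
  classical
  ext μ
  rw [coeff_Ew, coeff_mul, coeff_mul]
  by_cases hμ : μ 0 = α1 ∧ μ 1 = α2
  · rw [if_pos hμ]
    refine Finset.sum_congr rfl fun x hx => ?_
    by_cases hb : coeff x.2 (rename ![2,3] g) = 0
    · simp [hb]
    · have hb2 := rename23_coeff hb
      have hadd := Finset.HasAntidiagonal.mem_antidiagonal.mp hx
      have h0 : x.1 0 + x.2 0 = μ 0 := by rw [← hadd]; rfl
      have h1 : x.1 1 + x.2 1 = μ 1 := by rw [← hadd]; rfl
      rw [coeff_Ew, if_pos ⟨by omega, by omega⟩]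
  · rw [if_neg hμ]
    symm
    refine Finset.sum_eq_zero fun x hx => ?_
    by_cases hb : coeff x.2 (rename ![2,3] g) = 0
    · simp [hb]
    · have hb2 := rename23_coeff hb
      have hadd := Finset.HasAntidiagonal.mem_antidiagonal.mp hx
      have h0 : x.1 0 + x.2 0 = μ 0 := by rw [← hadd]; rfl
      have h1 : x.1 1 + x.2 1 = μ 1 := by rw [← hadd]; rfl
      rw [coeff_Ew, if_neg (by omega), zero_mul]

lemma Ew_mul_big (α1 α2 d : ℕ) (hd : α1 + α2 < d) (t : MvPolynomial (Fin 4) A)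
    (F : MvPolynomial (Fin 4) A) (hF : ∀ μ : Fin 4 →₀ ℕ, coeff μ F ≠ 0 → μ 0 + μ 1 = d) :
    Ew α1 α2 (t * F) = 0 := by
  classical
  ext μ
  rw [coeff_Ew, coeff_zero]
  split_ifs with hμ
  · rw [coeff_mul]
    refine Finset.sum_eq_zero fun x hx => ?_
    by_cases hb : coeff x.2 F = 0
    · simp [hb]
    · have hb2 := hF _ hb
      have hadd := Finset.HasAntidiagonal.mem_antidiagonal.mp hx
      have h0 : x.1 0 + x.2 0 = μ 0 := by rw [← hadd]; rfl
      have h1 : x.1 1 + x.2 1 = μ 1 := by rw [← hadd]; rfl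
      omega
  · rfl

lemma Ew_kill (α1 α2 : ℕ) (i : Fin 4) (n : ℕ) (t : MvPolynomial (Fin 4) A)
    (h : ∀ μ : Fin 4 →₀ ℕ, μ 0 = α1 → μ 1 = α2 → ¬ n ≤ μ i) :
    Ew α1 α2 (X i ^ n * t) = 0 := by
  classical
  ext μ
  rw [coeff_Ew, coeff_zero]
  split_ifs with hμ
  · rw [coeff_mul]
    refine Finset.sum_eq_zero fun x hx => ?_
    rw [coeff_X_pow]
    split_ifs with hs
    · exfalso
      have hadd := Finset.HasAntidiagonal.mem_antidiagonal.mp hx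
      have h0 : x.1 i + x.2 i = μ i := by rw [← hadd]; rfl
      have : x.1 i = n := by rw [← hs]; simp
      exact h μ hμ.1 hμ.2 (by omega)
    · exact zero_mul _
  · rfl

lemma Ew_monomial (α1 α2 : ℕ) (m : Fin 4 →₀ ℕ) (c : A) :
    Ew α1 α2 (monomial m c) = if m 0 = α1 ∧ m 1 = α2 then monomial m c else 0 := by
  classical
  ext μ
  rw [coeff_Ew]
  split_ifs with h1 h2 h2 <;>
    simp only [coeff_monomial, coeff_zero] <;> split_ifs with h3 <;> first | rfl | (subst h3; tauto)

lemma Ew_Xpow_prod (α1 α2 p q : ℕ) (g : MvPolynomial (Fin 2) A) :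
    Ew α1 α2 (X 0 ^ p * X 1 ^ q * rename ![2,3] g) =
      if p = α1 ∧ q = α2 then X 0 ^ p * X 1 ^ q * rename ![2,3] g else 0 := by
  rw [Ew_mul_rename]
  have : (X 0 ^ p * X 1 ^ q : MvPolynomial (Fin 4) A) =
      monomial (Finsupp.single 0 p + Finsupp.single 1 q) 1 := by
    rw [X_pow_eq_monomial, X_pow_eq_monomial, monomial_mul, one_mul]
  rw [this, Ew_monomial]
  have e0 : ((Finsupp.single 0 p + Finsupp.single 1 q : Fin 4 →₀ ℕ)) 0 = p := by simp
  have e1 : ((Finsupp.single 0 p + Finsupp.single 1 q : Fin 4 →₀ ℕ)) 1 = q := by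
    simp [Finsupp.single_apply]
  rw [e0, e1]
  split_ifs <;> simp

lemma Ew_sum (k : ℕ) (p : MvPolynomial (Fin 4) A) :
    ∑ α1 ∈ Finset.range (k+1), Ew α1 (k - α1) p =
      weightedHomogeneousComponent ![1,1,0,0] k p := by
  classical
  ext μ
  rw [coeff_sum]
  simp only [coeff_Ew, coeff_weightedHomogeneousComponent, weight_fin4]
  simp only [Matrix.cons_val_zero, Matrix.cons_val_one, Matrix.head_cons,
    Matrix.cons_val_two, Matrix.tail_cons, Matrix.cons_val_three, Matrix.head_fin_const,
    mul_one, mul_zero, add_zero]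
  by_cases h : μ 0 + μ 1 = k
  · rw [if_pos h]
    rw [Finset.sum_congr rfl (g := fun a => if a = μ 0 then coeff μ p else 0)
      (fun a ha => by
        have hak := Finset.mem_range.mp ha
        by_cases hc : a = μ 0
        · subst hc; rw [if_pos ⟨rfl, by omega⟩]; simp
        · rw [if_neg (fun hcc => hc hcc.1.symm)]; simp [hc])]
    rw [Finset.sum_ite_eq' (Finset.range (k+1)) (μ 0) (fun _ => coeff μ p)]
    rw [if_pos (Finset.mem_range.mpr (by omega))]
  · rw [if_neg h]
    refine Finset.sum_eq_zero fun a ha => ?_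
    have := Finset.mem_range.mp ha
    rw [if_neg (by omega)]


lemma X0_mul_eq_X1_mul {u v : MvPolynomial (Fin 4) A} (h : X 0 * u = X 1 * v) :
    ∃ q, u = X 1 * q ∧ v = X 0 * q := by
  classical
  have hu : ∀ μ : Fin 4 →₀ ℕ, μ 1 = 0 → coeff μ u = 0 := by
    intro μ hμ
    have h1 : coeff (Finsupp.single 0 1 + μ) (X 0 * u) = coeff μ u := coeff_X_mul μ 0 u
    have h2 : coeff (Finsupp.single (0:Fin 4) 1 + μ) (X 1 * v) = 0 := by
      rw [coeff_X_mul']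
      rw [if_neg]
      simp [Finsupp.single_apply, hμ]
    rw [← h1, h, h2]
  have hmod : u.modMonomial (Finsupp.single 1 1) = 0 := by
    ext μ
    by_cases hle : Finsupp.single (1 : Fin 4) 1 ≤ μ
    · rw [coeff_modMonomial_of_le _ hle, coeff_zero]
    · rw [coeff_modMonomial_of_not_le _ hle, coeff_zero]
      apply hu
      rw [Finsupp.single_le_iff] at hle
      omega
  refine ⟨u.divMonomial (Finsupp.single 1 1), ?_, ?_⟩
  · have := divMonomial_add_modMonomial_single u 1
    rw [hmod, add_zero] at this
    exact this.symm
  · have hXu : u = X 1 * u.divMonomial (Finsupp.single 1 1) := by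
      have := divMonomial_add_modMonomial_single u 1
      rw [hmod, add_zero] at this
      exact this.symm
    apply (MvPolynomial.isRegular_X (n := (1 : Fin 4))).left
    show X 1 * v = X 1 * (X 0 * u.divMonomial (Finsupp.single 1 1))
    conv_lhs => rw [← h]
    conv_lhs => rw [hXu]
    ring

lemma coprime02 {u v : MvPolynomial (Fin 4) A}
    (h : (X 0 - X 2) * u = (X 1 - X 3) * v) :
    ∃ q, u = (X 1 - X 3) * q ∧ v = (X 0 - X 2) * q := by
  set φ : MvPolynomial (Fin 4) A →ₐ[A] MvPolynomial (Fin 4) A :=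
    aeval ![X 0 + X 2, X 1 + X 3, X 2, X 3] with hφ
  set ψ : MvPolynomial (Fin 4) A →ₐ[A] MvPolynomial (Fin 4) A :=
    aeval ![X 0 - X 2, X 1 - X 3, X 2, X 3] with hψ
  have hψφ : ∀ p, ψ (φ p) = p := by
    intro p
    have : ψ.comp φ = aeval X := by
      rw [hφ, comp_aeval]
      congr 1
      funext i
      fin_cases i <;> simp [hψ]
    have := congrArg (fun f => f p) this
    simpa [aeval_X_left_apply] using this
  have hφ0 : φ (X 0 - X 2) = X 0 := by simp [hφ]
  have hφ1 : φ (X 1 - X 3) = X 1 := by simp [hφ]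
  have h' : X 0 * φ u = X 1 * φ v := by
    have := congrArg φ h
    rw [map_mul, map_mul, hφ0, hφ1] at this
    exact this
  obtain ⟨q, hq1, hq2⟩ := X0_mul_eq_X1_mul h'
  refine ⟨ψ q, ?_, ?_⟩
  · have := congrArg ψ hq1
    rw [hψφ, map_mul] at this
    simpa [hψ] using this
  · have := congrArg ψ hq2
    rw [hψφ, map_mul] at this
    simpa [hψ] using this

lemma exists_dec (g : MvPolynomial (Fin 2) A) :
    ∃ u v : MvPolynomial (Fin 4) A,
      rename ![0,1] g - rename ![2,3] g = (X 0 - X 2) * u + (X 1 - X 3) * v := by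
  induction g using MvPolynomial.induction_on with
  | C a => exact ⟨0, 0, by simp⟩
  | add p q hp hq =>
    obtain ⟨up, vp, hp⟩ := hp
    obtain ⟨uq, vq, hq⟩ := hq
    exact ⟨up + uq, vp + vq, by rw [map_add, map_add]; linear_combination hp + hq⟩
  | mul_X p i hp =>
    obtain ⟨u, v, hp⟩ := hp
    fin_cases i
    · refine ⟨u * X 0 + rename ![2,3] p, v * X 0, ?_⟩
      rw [map_mul, map_mul, rename_X, rename_X]
      simp only [Fin.zero_eta, Fin.mk_one, Matrix.cons_val_zero, Matrix.cons_val_one,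
        Matrix.head_cons]
      linear_combination (X 0 : MvPolynomial (Fin 4) A) * hp
    · refine ⟨u * X 1, v * X 1 + rename ![2,3] p, ?_⟩
      rw [map_mul, map_mul, rename_X, rename_X]
      simp only [Fin.zero_eta, Fin.mk_one, Matrix.cons_val_zero, Matrix.cons_val_one,
        Matrix.head_cons]
      linear_combination (X 1 : MvPolynomial (Fin 4) A) * hp


end Stmt18Aux

namespace Stmt18Aux

variable {A : Type*} [CommRing A]

lemma key (d1 d2 k α1 : ℕ) (hα1 : α1 ≤ k) (hkd1 : k < d1) (hkd2 : k < d2)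
    (f1 f2 : MvPolynomial (Fin 2) A) (hf1 : f1.IsHomogeneous d1) (hf2 : f2.IsHomogeneous d2)
    (h11 h12 h21 h22 : MvPolynomial (Fin 4) A)
    (hh1 : rename ![0,1] f1 - rename ![2,3] f1 = (X 0 - X 2) * h11 + (X 1 - X 3) * h12)
    (hh2 : rename ![0,1] f2 - rename ![2,3] f2 = (X 0 - X 2) * h21 + (X 1 - X 3) * h22)
    (sα : MvPolynomial (Fin 2) A)
    (hsα : ∃ a11 a12 a21 a22 : MvPolynomial (Fin 2) A,
      f1 = X 0 ^ (α1 + 1) * a11 + X 1 ^ ((k - α1) + 1) * a12 ∧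
      f2 = X 0 ^ (α1 + 1) * a21 + X 1 ^ ((k - α1) + 1) * a22 ∧
      sα = a11 * a22 - a12 * a21) :
    Ew α1 (k - α1) (h11 * h22 - h12 * h21)
      - X 0 ^ α1 * X 1 ^ (k - α1) * rename ![2,3] sα ∈
      Ideal.span {rename ![0,1] f1, rename ![0,1] f2,
        (rename ![2,3] f1 : MvPolynomial (Fin 4) A), rename ![2,3] f2} := by
  obtain ⟨a11, a12, a21, a22, he1, he2, hes⟩ := hsα
  set α2 := k - α1 with hα2
  set P : MvPolynomial (Fin 4) A := ∑ p ∈ Finset.range (α1+1), X 0 ^ p * X 2 ^ (α1 - p)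
    with hPd
  set Q : MvPolynomial (Fin 4) A := ∑ q ∈ Finset.range (α2+1), X 1 ^ q * X 3 ^ (α2 - q)
    with hQd
  have hP : P * (X 0 - X 2) = X 0 ^ (α1+1) - X 2 ^ (α1+1) := by
    rw [hPd]
    simpa using geom_sum₂_mul (X 0 : MvPolynomial (Fin 4) A) (X 2) (α1+1)
  have hQ : Q * (X 1 - X 3) = X 1 ^ (α2+1) - X 3 ^ (α2+1) := by
    rw [hQd]
    simpa using geom_sum₂_mul (X 1 : MvPolynomial (Fin 4) A) (X 3) (α2+1)
  have hA1X : rename (![0,1] : Fin 2 → Fin 4) f1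
      = X 0 ^ (α1+1) * rename (![0,1] : Fin 2 → Fin 4) a11
        + X 1 ^ (α2+1) * rename (![0,1] : Fin 2 → Fin 4) a12 := by
    rw [he1]; simp
  have hA1Y : rename (![2,3] : Fin 2 → Fin 4) f1
      = X 2 ^ (α1+1) * rename (![2,3] : Fin 2 → Fin 4) a11
        + X 3 ^ (α2+1) * rename (![2,3] : Fin 2 → Fin 4) a12 := by
    rw [he1]; simp
  have hA2X : rename (![0,1] : Fin 2 → Fin 4) f2
      = X 0 ^ (α1+1) * rename (![0,1] : Fin 2 → Fin 4) a21
        + X 1 ^ (α2+1) * rename (![0,1] : Fin 2 → Fin 4) a22 := by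
    rw [he2]; simp
  have hA2Y : rename (![2,3] : Fin 2 → Fin 4) f2
      = X 2 ^ (α1+1) * rename (![2,3] : Fin 2 → Fin 4) a21
        + X 3 ^ (α2+1) * rename (![2,3] : Fin 2 → Fin 4) a22 := by
    rw [he2]; simp
  obtain ⟨u11, v11, hu11⟩ := exists_dec (A := A) a11
  obtain ⟨u12, v12, hu12⟩ := exists_dec (A := A) a12
  obtain ⟨u21, v21, hu21⟩ := exists_dec (A := A) a21
  obtain ⟨u22, v22, hu22⟩ := exists_dec (A := A) a22
  set g11 : MvPolynomial (Fin 4) A :=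
    X 0 ^ (α1+1) * u11 + X 1 ^ (α2+1) * u12 + P * rename ![2,3] a11 with hg11d
  set g12 : MvPolynomial (Fin 4) A :=
    X 0 ^ (α1+1) * v11 + X 1 ^ (α2+1) * v12 + Q * rename ![2,3] a12 with hg12d
  set g21 : MvPolynomial (Fin 4) A :=
    X 0 ^ (α1+1) * u21 + X 1 ^ (α2+1) * u22 + P * rename ![2,3] a21 with hg21d
  set g22 : MvPolynomial (Fin 4) A :=
    X 0 ^ (α1+1) * v21 + X 1 ^ (α2+1) * v22 + Q * rename ![2,3] a22 with hg22d
  have hg1 : rename ![0,1] f1 - rename ![2,3] f1 = (X 0 - X 2) * g11 + (X 1 - X 3) * g12 := by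
    rw [hg11d, hg12d, hA1X, hA1Y]
    linear_combination (X 0 : MvPolynomial (Fin 4) A) ^ (α1+1) * hu11
      + (X 1 : MvPolynomial (Fin 4) A) ^ (α2+1) * hu12
      - rename ![2,3] a11 * hP - rename ![2,3] a12 * hQ
  have hg2 : rename ![0,1] f2 - rename ![2,3] f2 = (X 0 - X 2) * g21 + (X 1 - X 3) * g22 := by
    rw [hg21d, hg22d, hA2X, hA2Y]
    linear_combination (X 0 : MvPolynomial (Fin 4) A) ^ (α1+1) * hu21
      + (X 1 : MvPolynomial (Fin 4) A) ^ (α2+1) * hu22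
      - rename ![2,3] a21 * hP - rename ![2,3] a22 * hQ
  obtain ⟨q1, hq1a, hq1b⟩ := coprime02 (u := h11 - g11) (v := g12 - h12)
    (by linear_combination hg1 - hh1)
  obtain ⟨q2, hq2a, hq2b⟩ := coprime02 (u := h21 - g21) (v := g22 - h22)
    (by linear_combination hg2 - hh2)
  have hdet : h11 * h22 - h12 * h21 = (g11 * g22 - g12 * g21)
      + (q1 * (rename ![0,1] f2 - rename ![2,3] f2)
        - q2 * (rename ![0,1] f1 - rename ![2,3] f1)) := by
    have e11 : h11 = g11 + (X 1 - X 3) * q1 := by linear_combination hq1a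
    have e12 : h12 = g12 - (X 0 - X 2) * q1 := by linear_combination -hq1b
    have e21 : h21 = g21 + (X 1 - X 3) * q2 := by linear_combination hq2a
    have e22 : h22 = g22 - (X 0 - X 2) * q2 := by linear_combination -hq2b
    rw [e11, e12, e21, e22]
    linear_combination q2 * hg1 - q1 * hg2
  have hEdetg : Ew α1 α2 (g11 * g22 - g12 * g21)
      = X 0 ^ α1 * X 1 ^ α2 * rename ![2,3] sα := by
    have hsplit : g11 * g22 - g12 * g21 =
        X 0 ^ (α1+1) * (u11 * g22 + P * rename ![2,3] a11 * v21
          - v11 * g21 - Q * rename ![2,3] a12 * u21)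
      + X 1 ^ (α2+1) * (u12 * g22 + P * rename ![2,3] a11 * v22
          - v12 * g21 - Q * rename ![2,3] a12 * u22)
      + P * Q * rename ![2,3] sα := by
      rw [hes, map_sub, map_mul, map_mul]
      rw [hg11d, hg12d, hg21d, hg22d]
      ring
    rw [hsplit, map_add, map_add]
    rw [Ew_kill α1 α2 0 (α1+1) _ (fun μ h0 h1 => by omega)]
    rw [Ew_kill α1 α2 1 (α2+1) _ (fun μ h0 h1 => by omega)]
    have hPQ : P * Q * rename ![2,3] sα = ∑ p ∈ Finset.range (α1+1), ∑ q ∈ Finset.range (α2+1),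
        X 0 ^ p * X 1 ^ q * rename ![2,3] (X 0 ^ (α1 - p) * X 1 ^ (α2 - q) * sα) := by
      rw [hPd, hQd, Finset.sum_mul_sum, Finset.sum_mul]
      refine Finset.sum_congr rfl fun p _ => ?_
      rw [Finset.sum_mul]
      refine Finset.sum_congr rfl fun q _ => ?_
      simp only [map_mul, map_pow, rename_X]
      simp only [Matrix.cons_val_zero, Matrix.cons_val_one, Matrix.head_cons]
      ring
    rw [hPQ, map_sum]
    rw [Finset.sum_eq_single_of_mem α1 (Finset.mem_range.mpr (by omega))]
    · rw [map_sum, Finset.sum_eq_single_of_mem α2 (Finset.mem_range.mpr (by omega))]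
      · rw [Ew_Xpow_prod, if_pos ⟨rfl, rfl⟩]
        simp
      · intro q _ hq
        rw [Ew_Xpow_prod, if_neg (by tauto)]
    · intro p _ hp
      rw [map_sum]
      refine Finset.sum_eq_zero fun q _ => ?_
      rw [Ew_Xpow_prod, if_neg (by tauto)]
  have hfinal : Ew α1 α2 (h11 * h22 - h12 * h21)
      - X 0 ^ α1 * X 1 ^ α2 * rename ![2,3] sα
      = Ew α1 α2 q2 * rename ![2,3] f1 - Ew α1 α2 q1 * rename ![2,3] f2 := by
    have e1 : Ew α1 α2 (q1 * (rename (![0,1] : Fin 2 → Fin 4) f2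
        - rename (![2,3] : Fin 2 → Fin 4) f2)) = - (Ew α1 α2 q1 * rename ![2,3] f2) := by
      rw [mul_sub, map_sub, Ew_mul_big α1 α2 d2 (by omega) q1 (rename ![0,1] f2)
        (fun μ h => renameX_coeff hf2 h), Ew_mul_rename]
      ring
    have e2 : Ew α1 α2 (q2 * (rename (![0,1] : Fin 2 → Fin 4) f1
        - rename (![2,3] : Fin 2 → Fin 4) f1)) = - (Ew α1 α2 q2 * rename ![2,3] f1) := by
      rw [mul_sub, map_sub, Ew_mul_big α1 α2 d1 (by omega) q2 (rename ![0,1] f1)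
        (fun μ h => renameX_coeff hf1 h), Ew_mul_rename]
      ring
    rw [hdet, map_add, hEdetg, map_sub, e1, e2]
    ring
  rw [hfinal]
  apply Submodule.sub_mem
  · exact Ideal.mul_mem_left _ _ (Ideal.subset_span (by simp))
  · exact Ideal.mul_mem_left _ _ (Ideal.subset_span (by simp))

end Stmt18Aux


/-- `isSylv d1 d2 β1 β2 f1 f2 s` : `s` is (a representative of) the Sylvester form
`sylv_{(β1,β2)}(f1,f2)`. -/
def isSylv {A : Type*} [CommRing A] (d1 d2 β1 β2 : ℕ)
    (f1 f2 s : MvPolynomial (Fin 2) A) : Prop :=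
  ∃ a11 a12 a21 a22 : MvPolynomial (Fin 2) A,
    a11.IsHomogeneous (d1 - β1 - 1) ∧ a12.IsHomogeneous (d1 - β2 - 1) ∧
    a21.IsHomogeneous (d2 - β1 - 1) ∧ a22.IsHomogeneous (d2 - β2 - 1) ∧
    f1 = X 0 ^ (β1 + 1) * a11 + X 1 ^ (β2 + 1) * a12 ∧
    f2 = X 0 ^ (β1 + 1) * a21 + X 1 ^ (β2 + 1) * a22 ∧
    s = a11 * a22 - a12 * a21

/-- Let `f1, f2 ∈ A[X1,X2]` be homogeneous of degrees `d1 ≤ d2`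
forming a regular sequence, `δ = d1+d2−2`.  For every `ν` with `0 ≤ δ−ν ≤ d1−1`, the
Morley form component of bidegree `(δ−ν, ν)` satisfies
`morl_{δ−ν,ν}(f1,f2) = Σ_{|α|=δ−ν} X^α ⊗ sylv_α(f1,f2)` in `B_{δ−ν} ⊗_A B_ν`
(identified with classes in `A[X,Y]/(f1(X),f2(X),f1(Y),f2(Y))`; the component is the
weight-(1,1,0,0) homogeneous component of degree `δ−ν` of `det (h_{i,j})`, and
`α = (α1, δ−ν−α1)`, `X^α = X1^{α1} X2^{α2}`). -/
theorem stmt18 {A : Type*} [CommRing A] [Nontrivial A] (d1 d2 ν : ℕ)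
    (hd1 : 1 ≤ d1) (hd12 : d1 ≤ d2)
    (hν1 : ν ≤ d1 + d2 - 2) (hν2 : d1 + d2 - 2 - ν ≤ d1 - 1)
    (f1 f2 : MvPolynomial (Fin 2) A)
    (hf1 : f1.IsHomogeneous d1) (hf2 : f2.IsHomogeneous d2)
    (hreg : RingTheory.Sequence.IsRegular (MvPolynomial (Fin 2) A) [f1, f2])
    (F1X F2X F1Y F2Y : MvPolynomial (Fin 4) A)
    (hF1X : F1X = rename ![0, 1] f1) (hF2X : F2X = rename ![0, 1] f2)
    (hF1Y : F1Y = rename ![2, 3] f1) (hF2Y : F2Y = rename ![2, 3] f2)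
    -- a decomposition defining the Morley form
    (h11 h12 h21 h22 : MvPolynomial (Fin 4) A)
    (hh1 : F1X - F1Y = (X 0 - X 2) * h11 + (X 1 - X 3) * h12)
    (hh2 : F2X - F2Y = (X 0 - X 2) * h21 + (X 1 - X 3) * h22)
    -- chosen representatives of the Sylvester forms `sylv_{(α1, δ−ν−α1)}(f1,f2)`
    (s : ℕ → MvPolynomial (Fin 2) A)
    (hs : ∀ α1 ≤ d1 + d2 - 2 - ν,
      isSylv d1 d2 α1 (d1 + d2 - 2 - ν - α1) f1 f2 (s α1)) :
    weightedHomogeneousComponent ![1, 1, 0, 0] (d1 + d2 - 2 - ν) (h11 * h22 - h12 * h21) -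
        ∑ α1 ∈ Finset.range (d1 + d2 - 2 - ν + 1),
          X 0 ^ α1 * X 1 ^ (d1 + d2 - 2 - ν - α1) * rename ![2, 3] (s α1) ∈
      Ideal.span {F1X, F2X, F1Y, F2Y} := by
  subst hF1X hF2X hF1Y hF2Y
  set k := d1 + d2 - 2 - ν with hk
  rw [← Stmt18Aux.Ew_sum k (h11 * h22 - h12 * h21), ← Finset.sum_sub_distrib]
  apply Submodule.sum_mem
  intro α1 hα1
  have hα1k : α1 ≤ k := Nat.lt_succ_iff.mp (Finset.mem_range.mp hα1)
  have h' : ∃ a11 a12 a21 a22 : MvPolynomial (Fin 2) A,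
      a11.IsHomogeneous (d1 - α1 - 1) ∧ a12.IsHomogeneous (d1 - (k - α1) - 1) ∧
      a21.IsHomogeneous (d2 - α1 - 1) ∧ a22.IsHomogeneous (d2 - (k - α1) - 1) ∧
      f1 = X 0 ^ (α1 + 1) * a11 + X 1 ^ ((k - α1) + 1) * a12 ∧
      f2 = X 0 ^ (α1 + 1) * a21 + X 1 ^ ((k - α1) + 1) * a22 ∧
      s α1 = a11 * a22 - a12 * a21 := hs α1 hα1k
  obtain ⟨a11, a12, a21, a22, -, -, -, -, he1, he2, hes⟩ := h'
  exact Stmt18Aux.key d1 d2 k α1 hα1k (by omega) (by omega) f1 f2 hf1 hf2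
    h11 h12 h21 h22 hh1 hh2 (s α1) ⟨a11, a12, a21, a22, he1, he2, hes⟩
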